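/- Fix R ≥ 1 and dimensions m₀, m₁, …, m_R ∈ ℕ with m₀ = m and m_R = L, let σ : ℝ → ℝ and ℓ : ℝ^L → ℝ be continuously differentiable (C¹), fix parameters Θ⁰ = (Θ₁⁰, …, Θ_R⁰) with Θ_r⁰ a real m_r × m_{r−1} matrix and a target g in the dual of the parameter space, and define the R-layer network f_Θ(x) = Θ_R σ(Θ_{R−1} σ(⋯ σ(Θ₁ x) ⋯)) (σ applied entrywise) and the gradient-inversion cost c(x) = ‖D_Θ [ℓ(f_Θ(x))] |_{Θ = Θ⁰} − g‖. Suppose x* ∈ [0,1]^m is the unique global minimizer of c over [0,1]^m. Then there exists a function δ : ℝ → ℝ with δ(ε) → 0 as ε → 0⁺ such that for every ε ≥ 0, for every map G : [0,1]^k → [0,1]^m for which there exists z̃ ∈ [0,1]^k with ‖G(z̃) − x*‖ ≤ ε, and for every global minimizer z* of c ∘ G over [0,1]^k, one has ‖G(z*) − x*‖ ≤ δ(ε). -/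

import Mathlib

attribute [local instance] Matrix.normedAddCommGroup Matrix.normedSpace

/-- The unit cube `[0,1]^n` in Euclidean space `ℝ^n`. -/
def unitCube (n : ℕ) : Set (EuclideanSpace ℝ (Fin n)) :=
  WithLp.ofLp ⁻¹' (Set.univ.pi fun _ => Set.Icc (0 : ℝ) 1)

/-- Hidden activations of a feed-forward network: `h₀ = x` and
`h_{r+1} = σ(Θ_r · h_r)` with `σ` applied entrywise. -/
noncomputable def hiddenLayer (dims : ℕ → ℕ) (σ : ℝ → ℝ)
    (Θ : (r : ℕ) → Matrix (Fin (dims (r + 1))) (Fin (dims r)) ℝ)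
    (x : EuclideanSpace ℝ (Fin (dims 0))) :
    (r : ℕ) → EuclideanSpace ℝ (Fin (dims r))
  | 0 => x
  | (r + 1) => WithLp.toLp 2 fun i => σ ((Θ r).mulVec (hiddenLayer dims σ Θ x r) i)

/-- Extension of a finitely-indexed parameter tuple to an `ℕ`-indexed one (by zero). -/
noncomputable def extendParams (R : ℕ) (dims : ℕ → ℕ)
    (Θ : (r : Fin R) → Matrix (Fin (dims ((r : ℕ) + 1))) (Fin (dims (r : ℕ))) ℝ) :
    (r : ℕ) → Matrix (Fin (dims (r + 1))) (Fin (dims r)) ℝ :=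
  fun r => if h : r < R then Θ ⟨r, h⟩ else 0

/-- The parameter space of an `R`-layer network, `R = R' + 1`: a tuple of `R` real matrices,
`Θ_r` of size `dims (r+1) × dims r`. -/
abbrev NetParams (R' : ℕ) (dims : ℕ → ℕ) : Type :=
  (r : Fin (R' + 1)) → Matrix (Fin (dims ((r : ℕ) + 1))) (Fin (dims (r : ℕ))) ℝ

/-- The `R`-layer network `f_Θ(x) = Θ_R σ(Θ_{R-1} σ(⋯ σ(Θ₁ x) ⋯))`, with `R = R' + 1 ≥ 1`,
layer widths `dims 0, dims 1, …, dims (R'+1)`, and no activation on the last layer. -/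
noncomputable def netFun (R' : ℕ) (dims : ℕ → ℕ) (σ : ℝ → ℝ)
    (Θ : NetParams R' dims) (x : EuclideanSpace ℝ (Fin (dims 0))) :
    EuclideanSpace ℝ (Fin (dims (R' + 1))) :=
  WithLp.toLp 2 fun i =>
    (extendParams (R' + 1) dims Θ R').mulVec
      (hiddenLayer dims σ (extendParams (R' + 1) dims Θ) x R') i

/-! The map `(Θ, x) ↦ ℓ (f_Θ x)` is jointly C¹, so its partial derivative in `Θ` at `Θ⁰` depends
continuously on `x`, and `c` is continuous. On a compact set, a continuous function with a strict
minimum at `x*` only takes values close to `c x*` near `x*`. With `δ ε` the largest distance to `x*`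
of a point whose cost is at most the cost of some point `ε`-close to `x*`, continuity of `c` at `x*`
then gives `δ ε → 0`. -/

open Filter Topology

section

variable {𝕜 E F G : Type*} [NontriviallyNormedField 𝕜] [NormedAddCommGroup E] [NormedSpace 𝕜 E]
  [NormedAddCommGroup F] [NormedSpace 𝕜 F] [NormedAddCommGroup G] [NormedSpace 𝕜 G]

theorem ContDiff.continuous_fderiv_partial_left {H : E × F → G} (hH : ContDiff 𝕜 1 H) (e : E) :
    Continuous fun x => fderiv 𝕜 (fun e' => H (e', x)) e := by
  have hpartial : ∀ x, fderiv 𝕜 (fun e' => H (e', x)) e =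
      (fderiv 𝕜 H (e, x)).comp (ContinuousLinearMap.inl 𝕜 E F) := fun x =>
    (((hH.differentiable one_ne_zero) (e, x)).hasFDerivAt.comp e
      (hasFDerivAt_prodMk_left e x)).fderiv
  simp only [hpartial]
  exact ((ContinuousLinearMap.compL 𝕜 E (E × F) G).flip
    (ContinuousLinearMap.inl 𝕜 E F)).continuous.comp
    ((hH.continuous_fderiv one_ne_zero).comp (continuous_const.prodMk continuous_id))

end

section

variable {X : Type*} [MetricSpace X] {K : Set X} {c : X → ℝ} {x₀ : X}

theorem IsCompact.exists_sublevel_subset_ball (hK : IsCompact K) (hc : ContinuousOn c K)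
    (hmin : ∀ x ∈ K, c x ≤ c x₀ → x = x₀) {η : ℝ} (hη : 0 < η) :
    ∃ t, c x₀ < t ∧ ∀ x ∈ K, c x < t → dist x x₀ < η := by
  have hfar : ∀ x ∈ K ∩ {x | η ≤ dist x x₀}, c x₀ < c x := fun x hx =>
    lt_of_not_ge fun hle => hη.not_ge (by simpa [hmin x hx.1 hle] using hx.2)
  obtain ⟨t, hct, ht⟩ := (hK.inter_right (isClosed_le continuous_const
    (continuous_id.dist continuous_const))).exists_forall_le' (hc.mono Set.inter_subset_left) hfar
  exact ⟨t, hct, fun x hx hxt => lt_of_not_ge fun hfar => (ht x ⟨hx, hfar⟩).not_gt hxt⟩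

theorem IsCompact.exists_stability_modulus (hK : IsCompact K) (hc : ContinuousOn c K)
    (hx₀ : x₀ ∈ K) (hmin : ∀ x ∈ K, c x ≤ c x₀ → x = x₀) :
    ∃ δ : ℝ → ℝ, Tendsto δ (𝓝 0) (𝓝 0) ∧
      ∀ ε, ∀ y ∈ K, ∀ z ∈ K, dist z x₀ ≤ ε → c y ≤ c z → dist y x₀ ≤ δ ε := by
  set S : ℝ → Set ℝ := fun ε =>
    {d | ∃ y ∈ K, ∃ z ∈ K, dist z x₀ ≤ ε ∧ c y ≤ c z ∧ d = dist y x₀}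
  have hS_bdd : ∀ ε, BddAbove (S ε) := by
    obtain ⟨C, hC⟩ := (hK.image (continuous_id.dist continuous_const)).isBounded.bddAbove
    exact fun ε => ⟨C, by rintro _ ⟨y, hy, -, -, -, -, rfl⟩; exact hC ⟨y, hy, rfl⟩⟩
  refine ⟨fun ε => sSup (S ε), tendsto_order.2 ⟨fun a ha => ?_, fun a ha => ?_⟩,
    fun ε y hy z hz hzε hyz => le_csSup (hS_bdd ε) ⟨y, hy, z, hz, hzε, hyz, rfl⟩⟩
  · exact Eventually.of_forall fun ε => ha.trans_le <|
      Real.sSup_nonneg (by rintro _ ⟨y, -, -, -, -, -, rfl⟩; exact dist_nonneg)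
  · obtain ⟨t, hct, ht⟩ := hK.exists_sublevel_subset_ball hc hmin (half_pos ha)
    obtain ⟨r, hr, hcr⟩ := Metric.continuousWithinAt_iff.1 (hc x₀ hx₀) (t - c x₀) (by linarith)
    filter_upwards [eventually_lt_nhds hr] with ε hε
    refine (Real.sSup_le ?_ (half_pos ha).le).trans_lt (half_lt_self ha)
    rintro _ ⟨y, hy, z, hz, hzε, hyz, rfl⟩
    have hcz := (abs_lt.1 (hcr hz (hzε.trans_lt hε))).2
    exact (ht y hy (by linarith)).le

end

section

variable {X : Type*} [NormedAddCommGroup X] [NormedSpace ℝ X] {n : WithTop ℕ∞}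

theorem ContDiff.matrix_mulVec_apply {a b : ℕ} {A : X → Matrix (Fin a) (Fin b) ℝ}
    {v : X → EuclideanSpace ℝ (Fin b)} (hA : ContDiff ℝ n A) (hv : ContDiff ℝ n v) (i : Fin a) :
    ContDiff ℝ n fun p => (A p).mulVec (v p) i := by
  simp only [Matrix.mulVec, dotProduct]
  exact ContDiff.sum fun j _ =>
    (contDiff_pi.1 (contDiff_pi.1 hA i) j).mul (contDiff_euclidean.1 hv j)

theorem contDiff_hiddenLayer {dims : ℕ → ℕ} {σ : ℝ → ℝ} (hσ : ContDiff ℝ n σ)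
    {Θ : X → (r : ℕ) → Matrix (Fin (dims (r + 1))) (Fin (dims r)) ℝ}
    (hΘ : ∀ r, ContDiff ℝ n fun p => Θ p r) {x : X → EuclideanSpace ℝ (Fin (dims 0))}
    (hx : ContDiff ℝ n x) (r : ℕ) :
    ContDiff ℝ n fun p => hiddenLayer dims σ (Θ p) (x p) r := by
  induction r with
  | zero => exact hx
  | succ r ih => exact contDiff_euclidean.2 fun i => hσ.comp ((hΘ r).matrix_mulVec_apply ih i)

theorem contDiff_extendParams_apply (R : ℕ) (dims : ℕ → ℕ) (r : ℕ) :
    ContDiff ℝ n fun Θ : (r : Fin R) → Matrix (Fin (dims ((r : ℕ) + 1))) (Fin (dims (r : ℕ))) ℝ =>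
      extendParams R dims Θ r := by
  unfold extendParams
  split_ifs with h
  · exact contDiff_pi.1 contDiff_id (⟨r, h⟩ : Fin R)
  · exact contDiff_const

theorem contDiff_netFun_uncurry (R' : ℕ) (dims : ℕ → ℕ) {σ : ℝ → ℝ} (hσ : ContDiff ℝ n σ) :
    ContDiff ℝ n fun p : NetParams R' dims × EuclideanSpace ℝ (Fin (dims 0)) =>
      netFun R' dims σ p.1 p.2 := by
  have hΘ : ∀ r, ContDiff ℝ n fun p : NetParams R' dims × EuclideanSpace ℝ (Fin (dims 0)) =>
      extendParams (R' + 1) dims p.1 r := fun r =>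
    (contDiff_extendParams_apply _ dims r).comp contDiff_fst
  exact contDiff_euclidean.2 fun i =>
    (hΘ R').matrix_mulVec_apply (contDiff_hiddenLayer hσ hΘ contDiff_snd R') i

end

theorem isCompact_unitCube (n : ℕ) : IsCompact (unitCube n) :=
  (EuclideanSpace.equiv (Fin n) ℝ).toHomeomorph.isCompact_preimage.2
    (isCompact_univ_pi fun _ => isCompact_Icc)

theorem latent_search_recovers_minimizer_of_net_cost_general
    (R' : ℕ) (L k : ℕ) (dims : ℕ → ℕ)
    (σ : ℝ → ℝ) (hσ : ContDiff ℝ 1 σ)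
    (ℓ : EuclideanSpace ℝ (Fin (dims (R' + 1))) → ℝ) (hℓ : ContDiff ℝ 1 ℓ)
    (Θ0 : NetParams R' dims) (g : NetParams R' dims →L[ℝ] ℝ)
    (c : EuclideanSpace ℝ (Fin (dims 0)) → ℝ)
    (hc : ∀ x, c x =
      @Norm.norm (NetParams R' dims →L[ℝ] ℝ) ContinuousLinearMap.hasOpNorm
        (fderiv ℝ (fun Θ : NetParams R' dims => ℓ (netFun R' dims σ Θ x)) Θ0 - g))
    (xstar : EuclideanSpace ℝ (Fin (dims 0))) (hxstar : xstar ∈ unitCube (dims 0))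
    (hmin : ∀ x ∈ unitCube (dims 0), c xstar ≤ c x)
    (huniq : ∀ x ∈ unitCube (dims 0), c x = c xstar → x = xstar) :
    ∃ δ : ℝ → ℝ,
      Filter.Tendsto δ (nhdsWithin 0 (Set.Ioi 0)) (nhds 0) ∧
      ∀ ε : ℝ, 0 ≤ ε →
        ∀ G : EuclideanSpace ℝ (Fin k) → EuclideanSpace ℝ (Fin (dims 0)),
          Set.MapsTo G (unitCube k) (unitCube (dims 0)) →
          (∃ ztilde ∈ unitCube k, ‖G ztilde - xstar‖ ≤ ε) →
          ∀ zstar ∈ unitCube k, (∀ z ∈ unitCube k, c (G zstar) ≤ c (G z)) →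
            ‖G zstar - xstar‖ ≤ δ ε := by
  have hc_cont : Continuous c := by
    rw [funext hc]
    exact (((hℓ.comp (contDiff_netFun_uncurry R' dims hσ)).continuous_fderiv_partial_left
      Θ0).sub continuous_const).norm
  have hstrict : ∀ x ∈ unitCube (dims 0), c x ≤ c xstar → x = xstar := fun x hx hle =>
    huniq x hx (hle.antisymm (hmin x hx))
  obtain ⟨δ, hδ, hδ_bound⟩ := (isCompact_unitCube (dims 0)).exists_stability_modulus
    hc_cont.continuousOn hxstar hstrict
  refine ⟨δ, hδ.mono_left nhdsWithin_le_nhds, fun ε _ G hG ⟨ztilde, hztilde, hGztilde⟩ zstar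
    hzstar hzstar_min => ?_⟩
  rw [← dist_eq_norm] at hGztilde ⊢
  exact hδ_bound ε _ (hG hzstar) _ (hG hztilde) hGztilde (hzstar_min ztilde hztilde)

/-- Property 1 of the paper: for the gradient-inversion cost
`c(x) = ‖D_Θ[ℓ(f_Θ(x))]|_{Θ = Θ⁰} − g‖` of an `R`-layer network (`R = R' + 1 ≥ 1`) with C¹
activation and C¹ loss, if `x*` is the unique global minimizer of `c` over `[0,1]^m`, then
there is `δ : ℝ → ℝ` with `δ(ε) → 0` as `ε → 0⁺` such that for every `ε ≥ 0`, every
generative model `G : [0,1]^k → [0,1]^m` approximating `x*` within `ε`, and every global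
minimizer `z*` of `c ∘ G` over `[0,1]^k`, one has `‖G(z*) − x*‖ ≤ δ(ε)`. -/
theorem latent_search_recovers_minimizer_of_net_cost
    (R' : ℕ) (m L k : ℕ) (dims : ℕ → ℕ) (hdims0 : dims 0 = m) (hdimsR : dims (R' + 1) = L)
    (σ : ℝ → ℝ) (hσ : ContDiff ℝ 1 σ)
    (ℓ : EuclideanSpace ℝ (Fin (dims (R' + 1))) → ℝ) (hℓ : ContDiff ℝ 1 ℓ)
    (Θ0 : NetParams R' dims) (g : NetParams R' dims →L[ℝ] ℝ)
    (c : EuclideanSpace ℝ (Fin (dims 0)) → ℝ)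
    (hc : ∀ x, c x =
      @Norm.norm (NetParams R' dims →L[ℝ] ℝ) ContinuousLinearMap.hasOpNorm
        (fderiv ℝ (fun Θ : NetParams R' dims => ℓ (netFun R' dims σ Θ x)) Θ0 - g))
    (xstar : EuclideanSpace ℝ (Fin (dims 0))) (hxstar : xstar ∈ unitCube (dims 0))
    (hmin : ∀ x ∈ unitCube (dims 0), c xstar ≤ c x)
    (huniq : ∀ x ∈ unitCube (dims 0), c x = c xstar → x = xstar) :
    ∃ δ : ℝ → ℝ,
      Filter.Tendsto δ (nhdsWithin 0 (Set.Ioi 0)) (nhds 0) ∧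
      ∀ ε : ℝ, 0 ≤ ε →
        ∀ G : EuclideanSpace ℝ (Fin k) → EuclideanSpace ℝ (Fin (dims 0)),
          Set.MapsTo G (unitCube k) (unitCube (dims 0)) →
          (∃ ztilde ∈ unitCube k, ‖G ztilde - xstar‖ ≤ ε) →
          ∀ zstar ∈ unitCube k, (∀ z ∈ unitCube k, c (G zstar) ≤ c (G z)) →
            ‖G zstar - xstar‖ ≤ δ ε :=
  latent_search_recovers_minimizer_of_net_cost_general R' L k dims σ hσ ℓ hℓ Θ0 g c hc xstar hxstar
    hmin huniq
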